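/- arXiv:2210.03357 — 4 statements merged into one kernel-verified Lean document; each statement's English description precedes it below -/
import Mathlib

section
/- Suppose (q, p, ρ) is a DSO solution satisfying Assumption 1. Then the equilibrium commuting costs satisfy ρ_{i,k} − d_i < ρ_{i+1,k} − d_{i+1} for every i ∈ {1,…,N−1} and every group k ∈ {1,…,K}. (Lemma A.3 of the paper.) -/
open MeasureTheory Finset Set

/-!
Since group `k` has positive demand at origin `i + 1`, it departs from there at some time `t`.
At `t` the departure-time complementarity condition makes `ρ_{i+1,k} - d_{i+1}` equal to the full
cost `β^k c(t) + p_1(t) + … + p_{i+1}(t)`, whereas for origin `i` it only bounds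
`ρ_{i,k} - d_i` by `β^k c(t) + p_1(t) + … + p_i(t)`. The gap is the toll `p_{i+1}(t)`, which is
positive by Assumption 1 because bottleneck `i + 1` carries flow at `t`.
-/

theorem dso_commuting_cost_strict_mono_general
    (N K : ℕ)
    (𝒯 : Set ℝ)
    -- base schedule delay cost function
    (c : ℝ → ℝ)
    -- heterogeneity parameters 1 = β¹ > β² > … > β^K > 0
    (β : ℕ → ℝ)
    -- free-flow travel times 0 ≤ d₁ < d₂ < … < d_N
    (d : ℕ → ℝ)
    -- demands
    (Q : ℕ → ℕ → ℝ) (hQ : ∀ i ∈ Finset.Icc 1 N, ∀ k ∈ Finset.Icc 1 K, 0 < Q i k)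
    -- a DSO solution (q, p, ρ)
    (q : ℕ → ℕ → ℝ → ℝ) (p : ℕ → ℝ → ℝ) (ρ : ℕ → ℕ → ℝ)
    -- KKT condition (i): departure time choice complementarity
    (hKKT1 : ∀ i ∈ Finset.Icc 1 N, ∀ k ∈ Finset.Icc 1 K, ∀ t ∈ 𝒯,
      0 ≤ q i k t ∧
      0 ≤ β k * c t + (∑ j ∈ Finset.Icc 1 i, p j t) + d i - ρ i k ∧
      q i k t * (β k * c t + (∑ j ∈ Finset.Icc 1 i, p j t) + d i - ρ i k) = 0)
    -- KKT condition (iii): demand conservation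
    (hKKT3 : ∀ i ∈ Finset.Icc 1 N, ∀ k ∈ Finset.Icc 1 K,
      ∫ t in 𝒯, q i k t = Q i k)
    -- Assumption 1
    (hA1 : ∀ i ∈ Finset.Icc 1 N, ∀ t ∈ 𝒯,
      (0 < p i t ↔ 0 < ∑ k ∈ Finset.Icc 1 K, q i k t)) :
    ∀ i, 1 ≤ i → i < N → ∀ k ∈ Finset.Icc 1 K,
      ρ i k - d i < ρ (i + 1) k - d (i + 1) := by
  intro i hi hiN k hk
  have hiI : i ∈ Finset.Icc 1 N := Finset.mem_Icc.mpr ⟨hi, hiN.le⟩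
  have hsuccI : i + 1 ∈ Finset.Icc 1 N := Finset.mem_Icc.mpr ⟨by omega, hiN⟩
  obtain ⟨t, htT, hqt⟩ : ∃ t ∈ 𝒯, 0 < q (i + 1) k t := by
    obtain ⟨t, htT, hne⟩ := exists_ne_zero_of_setIntegral_ne_zero
      ((hKKT3 _ hsuccI _ hk).trans_ne (hQ _ hsuccI _ hk).ne')
    exact ⟨t, htT, (hKKT1 _ hsuccI _ hk t htT).1.lt_of_ne' hne⟩
  have hcost_succ :
      β k * c t + (∑ j ∈ Finset.Icc 1 (i + 1), p j t) + d (i + 1) - ρ (i + 1) k = 0 :=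
    (mul_eq_zero.mp (hKKT1 _ hsuccI _ hk t htT).2.2).resolve_left hqt.ne'
  have hcost_le : 0 ≤ β k * c t + (∑ j ∈ Finset.Icc 1 i, p j t) + d i - ρ i k :=
    (hKKT1 _ hiI _ hk t htT).2.1
  have htoll : 0 < p (i + 1) t := (hA1 _ hsuccI t htT).mpr <|
    sum_pos' (fun k' hk' ↦ (hKKT1 _ hsuccI _ hk' t htT).1) ⟨k, hk, hqt⟩
  rw [sum_Icc_succ_top (by omega)] at hcost_succ
  linarith

/-- Lemma A.3 of the paper: equilibrium commuting costs net of free-flow times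
are strictly increasing along the corridor in the DSO state. -/
theorem dso_commuting_cost_strict_mono
    (N K : ℕ) (hN : 1 ≤ N) (hK : 1 ≤ K)
    (𝒯 : Set ℝ)
    -- base schedule delay cost function
    (c : ℝ → ℝ) (hc0 : c 0 = 0) (hccont : Continuous c)
    (hcdec : StrictAntiOn c (Set.Iic (0 : ℝ)))
    (hcinc : StrictMonoOn c (Set.Ici (0 : ℝ)))
    -- heterogeneity parameters 1 = β¹ > β² > … > β^K > 0
    (β : ℕ → ℝ) (hβ1 : β 1 = 1)
    (hβdec : ∀ k, 1 ≤ k → k < K → β (k + 1) < β k)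
    (hβpos : ∀ k ∈ Finset.Icc 1 K, 0 < β k)
    -- capacities μ₁ > μ₂ > … > μ_N > 0, μ_(N+1) = 0
    (μ : ℕ → ℝ) (hμdec : ∀ i, 1 ≤ i → i < N → μ (i + 1) < μ i)
    (hμpos : ∀ i ∈ Finset.Icc 1 N, 0 < μ i) (hμtop : μ (N + 1) = 0)
    -- free-flow travel times 0 ≤ d₁ < d₂ < … < d_N
    (d : ℕ → ℝ) (hd1 : 0 ≤ d 1)
    (hdinc : ∀ i, 1 ≤ i → i < N → d i < d (i + 1))
    -- demands
    (Q : ℕ → ℕ → ℝ) (hQ : ∀ i ∈ Finset.Icc 1 N, ∀ k ∈ Finset.Icc 1 K, 0 < Q i k)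
    -- a DSO solution (q, p, ρ)
    (q : ℕ → ℕ → ℝ → ℝ) (p : ℕ → ℝ → ℝ) (ρ : ℕ → ℕ → ℝ)
    (hqmeas : ∀ i k, Measurable (q i k)) (hpmeas : ∀ i, Measurable (p i))
    -- KKT condition (i): departure time choice complementarity
    (hKKT1 : ∀ i ∈ Finset.Icc 1 N, ∀ k ∈ Finset.Icc 1 K, ∀ t ∈ 𝒯,
      0 ≤ q i k t ∧
      0 ≤ β k * c t + (∑ j ∈ Finset.Icc 1 i, p j t) + d i - ρ i k ∧
      q i k t * (β k * c t + (∑ j ∈ Finset.Icc 1 i, p j t) + d i - ρ i k) = 0)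
    -- KKT condition (ii): capacity complementarity
    (hKKT2 : ∀ i ∈ Finset.Icc 1 N, ∀ t ∈ 𝒯,
      0 ≤ p i t ∧
      0 ≤ μ i - ∑ j ∈ Finset.Icc i N, ∑ k ∈ Finset.Icc 1 K, q j k t ∧
      p i t * (μ i - ∑ j ∈ Finset.Icc i N, ∑ k ∈ Finset.Icc 1 K, q j k t) = 0)
    -- KKT condition (iii): demand conservation
    (hKKT3 : ∀ i ∈ Finset.Icc 1 N, ∀ k ∈ Finset.Icc 1 K,
      ∫ t in 𝒯, q i k t = Q i k)
    -- Assumption 1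
    (hA1 : ∀ i ∈ Finset.Icc 1 N, ∀ t ∈ 𝒯,
      (0 < p i t ↔ 0 < ∑ k ∈ Finset.Icc 1 K, q i k t))
    (hA1' : ∀ i ∈ Finset.Icc 1 N, ({t ∈ 𝒯 | 0 < p i t}).OrdConnected) :
    ∀ i, 1 ≤ i → i < N → ∀ k ∈ Finset.Icc 1 K,
      ρ i k - d i < ρ (i + 1) k - d (i + 1) :=
  dso_commuting_cost_strict_mono_general N K 𝒯 c β d Q hQ q p ρ hKKT1 hKKT3 hA1
end

section
/- Suppose (q, p, ρ) is a DSO solution satisfying Assumption 1. Then the spatial sorting property holds: for every i ∈ {1,…,N−1} and every t ∈ 𝒯, if Σ_k q_{i,k}(t) > 0 then Σ_k q_{i+1,k}(t) > 0; equivalently, the arrival time window of commuters from origin i is included in that of commuters from origin i+1, i.e. 𝒯_i ⊆ 𝒯_{i+1}. (Lemma 1 of the paper.) -/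
/-!
If origin `i` is used at time `t` while origin `i + 1` is not, Assumption 1 gives `p_{i+1}(t) = 0`.
Some group `k` departs from `i` at `t`, and since its demand at `i + 1` is positive it also departs
from `i + 1` at some time `s`, where `p_{i+1}(s) > 0`. Comparing the equilibrium costs of group `k`
at both origins and both times, schedule delay, upstream tolls and free-flow times cancel, leaving
`p_{i+1}(s) ≤ p_{i+1}(t) = 0`.
-/

open MeasureTheory Finset

namespace DSO

def tripCost (c : ℝ → ℝ) (β d : ℕ → ℝ) (p : ℕ → ℝ → ℝ) (i k : ℕ) (t : ℝ) : ℝ :=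
  β k * c t + (∑ j ∈ Icc 1 i, p j t) + d i

theorem tripCost_succ (c : ℝ → ℝ) (β d : ℕ → ℝ) (p : ℕ → ℝ → ℝ) (i k : ℕ) (t : ℝ) :
    tripCost c β d p (i + 1) k t = tripCost c β d p i k t + p (i + 1) t + (d (i + 1) - d i) := by
  rw [tripCost, tripCost, sum_Icc_succ_top (Nat.le_add_left 1 i)]
  ring

/-- KKT condition (i): `ρ i k` is the equilibrium cost of group `k` at origin `i`. -/
def IsDepartureEquilibrium (N K : ℕ) (𝒯 : Set ℝ) (c : ℝ → ℝ) (β d : ℕ → ℝ)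
    (q : ℕ → ℕ → ℝ → ℝ) (p : ℕ → ℝ → ℝ) (ρ : ℕ → ℕ → ℝ) : Prop :=
  ∀ i ∈ Icc 1 N, ∀ k ∈ Icc 1 K, ∀ t ∈ 𝒯,
    0 ≤ q i k t ∧ 0 ≤ tripCost c β d p i k t - ρ i k ∧
      q i k t * (tripCost c β d p i k t - ρ i k) = 0

namespace IsDepartureEquilibrium

variable {N K : ℕ} {𝒯 : Set ℝ} {c : ℝ → ℝ} {β d : ℕ → ℝ} {q : ℕ → ℕ → ℝ → ℝ}
  {p : ℕ → ℝ → ℝ} {ρ : ℕ → ℕ → ℝ} {i k : ℕ} {s t : ℝ}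

theorem flow_nonneg (h : IsDepartureEquilibrium N K 𝒯 c β d q p ρ) (hi : i ∈ Icc 1 N)
    (hk : k ∈ Icc 1 K) (ht : t ∈ 𝒯) : 0 ≤ q i k t :=
  (h i hi k hk t ht).1

theorem le_tripCost (h : IsDepartureEquilibrium N K 𝒯 c β d q p ρ) (hi : i ∈ Icc 1 N)
    (hk : k ∈ Icc 1 K) (ht : t ∈ 𝒯) : ρ i k ≤ tripCost c β d p i k t :=
  sub_nonneg.1 (h i hi k hk t ht).2.1

theorem tripCost_eq_of_pos (h : IsDepartureEquilibrium N K 𝒯 c β d q p ρ) (hi : i ∈ Icc 1 N)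
    (hk : k ∈ Icc 1 K) (ht : t ∈ 𝒯) (hq : 0 < q i k t) : tripCost c β d p i k t = ρ i k :=
  sub_eq_zero.1 <| (mul_eq_zero.1 (h i hi k hk t ht).2.2).resolve_left hq.ne'

theorem toll_succ_le_of_flow_pos (h : IsDepartureEquilibrium N K 𝒯 c β d q p ρ) (hi : 1 ≤ i)
    (hiN : i < N) (hk : k ∈ Icc 1 K) (ht : t ∈ 𝒯) (hs : s ∈ 𝒯) (hqt : 0 < q i k t)
    (hqs : 0 < q (i + 1) k s) : p (i + 1) s ≤ p (i + 1) t := by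
  have hi' : i ∈ Icc 1 N := mem_Icc.2 ⟨hi, hiN.le⟩
  have hi1' : i + 1 ∈ Icc 1 N := mem_Icc.2 ⟨Nat.le_add_left 1 i, hiN⟩
  have ht_eq := h.tripCost_eq_of_pos hi' hk ht hqt
  have hs_le := h.le_tripCost hi' hk hs
  have hs_eq := h.tripCost_eq_of_pos hi1' hk hs hqs
  have ht_le := h.le_tripCost hi1' hk ht
  rw [tripCost_succ] at hs_eq ht_le
  linarith

end IsDepartureEquilibrium

end DSO

theorem MeasureTheory.exists_pos_of_setIntegral_pos {α : Type*} [MeasurableSpace α]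
    {μ : Measure α} {s : Set α} {f : α → ℝ} (hf : ∀ x ∈ s, 0 ≤ f x) (hpos : 0 < ∫ x in s, f x ∂μ) :
    ∃ x ∈ s, 0 < f x :=
  let ⟨x, hx, hne⟩ := exists_ne_zero_of_setIntegral_ne_zero hpos.ne'
  ⟨x, hx, (hf x hx).lt_of_ne' hne⟩

theorem dso_spatial_sorting_general
    (N K : ℕ)
    (𝒯 : Set ℝ)
    -- base schedule delay cost function
    (c : ℝ → ℝ)
    -- heterogeneity parameters 1 = β¹ > β² > … > β^K > 0
    (β : ℕ → ℝ)
    -- free-flow travel times 0 ≤ d₁ < d₂ < … < d_N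
    (d : ℕ → ℝ)
    -- demands
    (Q : ℕ → ℕ → ℝ) (hQ : ∀ i ∈ Finset.Icc 1 N, ∀ k ∈ Finset.Icc 1 K, 0 < Q i k)
    -- a DSO solution (q, p, ρ)
    (q : ℕ → ℕ → ℝ → ℝ) (p : ℕ → ℝ → ℝ) (ρ : ℕ → ℕ → ℝ)
    -- KKT condition (i): departure time choice complementarity
    (hKKT1 : ∀ i ∈ Finset.Icc 1 N, ∀ k ∈ Finset.Icc 1 K, ∀ t ∈ 𝒯,
      0 ≤ q i k t ∧
      0 ≤ β k * c t + (∑ j ∈ Finset.Icc 1 i, p j t) + d i - ρ i k ∧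
      q i k t * (β k * c t + (∑ j ∈ Finset.Icc 1 i, p j t) + d i - ρ i k) = 0)
    -- KKT condition (iii): demand conservation
    (hKKT3 : ∀ i ∈ Finset.Icc 1 N, ∀ k ∈ Finset.Icc 1 K,
      ∫ t in 𝒯, q i k t = Q i k)
    -- Assumption 1
    (hA1 : ∀ i ∈ Finset.Icc 1 N, ∀ t ∈ 𝒯,
      (0 < p i t ↔ 0 < ∑ k ∈ Finset.Icc 1 K, q i k t)) :
    (∀ i, 1 ≤ i → i < N → ∀ t ∈ 𝒯,
      0 < ∑ k ∈ Finset.Icc 1 K, q i k t →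
      0 < ∑ k ∈ Finset.Icc 1 K, q (i + 1) k t) ∧
    (∀ i, 1 ≤ i → i < N →
      {t ∈ 𝒯 | 0 < ∑ k ∈ Finset.Icc 1 K, q i k t} ⊆
        {t ∈ 𝒯 | 0 < ∑ k ∈ Finset.Icc 1 K, q (i + 1) k t}) := by
  have hequil : DSO.IsDepartureEquilibrium N K 𝒯 c β d q p ρ := hKKT1
  have sorting : ∀ i, 1 ≤ i → i < N → ∀ t ∈ 𝒯, 0 < ∑ k ∈ Icc 1 K, q i k t →
      0 < ∑ k ∈ Icc 1 K, q (i + 1) k t := by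
    intro i hi hiN t ht hflow
    have hi' : i ∈ Icc 1 N := mem_Icc.2 ⟨hi, hiN.le⟩
    have hi1' : i + 1 ∈ Icc 1 N := mem_Icc.2 ⟨Nat.le_add_left 1 i, hiN⟩
    obtain ⟨k, hk, hqt⟩ :=
      (sum_pos_iff_of_nonneg fun k hk => hequil.flow_nonneg hi' hk ht).1 hflow
    obtain ⟨s, hs, hqs⟩ := exists_pos_of_setIntegral_pos (fun s hs => hequil.flow_nonneg hi1' hk hs)
      (hKKT3 (i + 1) hi1' k hk ▸ hQ (i + 1) hi1' k hk)
    have htoll_s : 0 < p (i + 1) s := (hA1 (i + 1) hi1' s hs).2 <|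
      (sum_pos_iff_of_nonneg fun k hk => hequil.flow_nonneg hi1' hk hs).2 ⟨k, hk, hqs⟩
    exact (hA1 (i + 1) hi1' t ht).1 <|
      htoll_s.trans_le (hequil.toll_succ_le_of_flow_pos hi hiN hk ht hs hqt hqs)
  exact ⟨sorting, fun i hi hiN t ht => ⟨ht.1, sorting i hi hiN t ht.1 ht.2⟩⟩

/-- Lemma 1 of the paper: spatial sorting property of the DSO flow pattern,
𝒯_i ⊆ 𝒯_(i+1). -/
theorem dso_spatial_sorting
    (N K : ℕ) (hN : 1 ≤ N) (hK : 1 ≤ K)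
    (𝒯 : Set ℝ)
    -- base schedule delay cost function
    (c : ℝ → ℝ) (hc0 : c 0 = 0) (hccont : Continuous c)
    (hcdec : StrictAntiOn c (Set.Iic (0 : ℝ)))
    (hcinc : StrictMonoOn c (Set.Ici (0 : ℝ)))
    -- heterogeneity parameters 1 = β¹ > β² > … > β^K > 0
    (β : ℕ → ℝ) (hβ1 : β 1 = 1)
    (hβdec : ∀ k, 1 ≤ k → k < K → β (k + 1) < β k)
    (hβpos : ∀ k ∈ Finset.Icc 1 K, 0 < β k)
    -- capacities μ₁ > μ₂ > … > μ_N > 0, μ_(N+1) = 0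
    (μ : ℕ → ℝ) (hμdec : ∀ i, 1 ≤ i → i < N → μ (i + 1) < μ i)
    (hμpos : ∀ i ∈ Finset.Icc 1 N, 0 < μ i) (hμtop : μ (N + 1) = 0)
    -- free-flow travel times 0 ≤ d₁ < d₂ < … < d_N
    (d : ℕ → ℝ) (hd1 : 0 ≤ d 1)
    (hdinc : ∀ i, 1 ≤ i → i < N → d i < d (i + 1))
    -- demands
    (Q : ℕ → ℕ → ℝ) (hQ : ∀ i ∈ Finset.Icc 1 N, ∀ k ∈ Finset.Icc 1 K, 0 < Q i k)
    -- a DSO solution (q, p, ρ)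
    (q : ℕ → ℕ → ℝ → ℝ) (p : ℕ → ℝ → ℝ) (ρ : ℕ → ℕ → ℝ)
    (hqmeas : ∀ i k, Measurable (q i k)) (hpmeas : ∀ i, Measurable (p i))
    -- KKT condition (i): departure time choice complementarity
    (hKKT1 : ∀ i ∈ Finset.Icc 1 N, ∀ k ∈ Finset.Icc 1 K, ∀ t ∈ 𝒯,
      0 ≤ q i k t ∧
      0 ≤ β k * c t + (∑ j ∈ Finset.Icc 1 i, p j t) + d i - ρ i k ∧
      q i k t * (β k * c t + (∑ j ∈ Finset.Icc 1 i, p j t) + d i - ρ i k) = 0)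
    -- KKT condition (ii): capacity complementarity
    (hKKT2 : ∀ i ∈ Finset.Icc 1 N, ∀ t ∈ 𝒯,
      0 ≤ p i t ∧
      0 ≤ μ i - ∑ j ∈ Finset.Icc i N, ∑ k ∈ Finset.Icc 1 K, q j k t ∧
      p i t * (μ i - ∑ j ∈ Finset.Icc i N, ∑ k ∈ Finset.Icc 1 K, q j k t) = 0)
    -- KKT condition (iii): demand conservation
    (hKKT3 : ∀ i ∈ Finset.Icc 1 N, ∀ k ∈ Finset.Icc 1 K,
      ∫ t in 𝒯, q i k t = Q i k)
    -- Assumption 1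
    (hA1 : ∀ i ∈ Finset.Icc 1 N, ∀ t ∈ 𝒯,
      (0 < p i t ↔ 0 < ∑ k ∈ Finset.Icc 1 K, q i k t))
    (hA1' : ∀ i ∈ Finset.Icc 1 N, ({t ∈ 𝒯 | 0 < p i t}).OrdConnected) :
    (∀ i, 1 ≤ i → i < N → ∀ t ∈ 𝒯,
      0 < ∑ k ∈ Finset.Icc 1 K, q i k t →
      0 < ∑ k ∈ Finset.Icc 1 K, q (i + 1) k t) ∧
    (∀ i, 1 ≤ i → i < N →
      {t ∈ 𝒯 | 0 < ∑ k ∈ Finset.Icc 1 K, q i k t} ⊆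
        {t ∈ 𝒯 | 0 < ∑ k ∈ Finset.Icc 1 K, q (i + 1) k t}) :=
  dso_spatial_sorting_general N K 𝒯 c β d Q hQ q p ρ hKKT1 hKKT3 hA1
end

section
/- Suppose (q, p, ρ) is a DSO solution satisfying Assumption 1. Then the aggregated DSO flow is all-or-nothing: (a) for every i ∈ {1,…,N} and every t ∈ 𝒯, if Σ_k q_{i,k}(t) > 0 then Σ_k q_{i,k}(t) = μ_i − μ_{i+1}; and (b) the Lebesgue measure of the arrival time window 𝒯_i = {t ∈ 𝒯 : Σ_k q_{i,k}(t) > 0} equals (Σ_k Q_{i,k})/(μ_i − μ_{i+1}). (Lemma 2 of the paper.) -/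
/-!
Where flow leaves origin `i` at time `t`, Assumption 1 makes the toll `p i t` positive, so
bottleneck `i` is saturated at `t`. If `i < N`, bottleneck `i + 1` is saturated at `t` too: a group
`k` leaving origin `i` at `t` also leaves origin `i + 1` (its demand there is positive) at some
time `s`, where the toll `p (i + 1) s` is positive, and comparing the optimality of `t` for
`(i, k)` with that of `s` for `(i + 1, k)` gives `p (i + 1) s ≤ p (i + 1) t`. The flow from
origin `i` is the difference of the two saturated capacities, `μ i - μ (i + 1)` (with
`μ (N + 1) = 0`). A nonnegative flow taking the single positive value `m` integrates to `m`
times the length of its support.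
-/

namespace MeasureTheory

open Set

variable {α : Type*} [MeasurableSpace α] {μ : Measure α} {s : Set α} {f : α → ℝ}

lemma exists_pos_of_setIntegral_ne_zero (hf : ∀ x ∈ s, 0 ≤ f x) (h : ∫ x in s, f x ∂μ ≠ 0) :
    ∃ x ∈ s, 0 < f x := by
  by_contra! hneg
  exact h (setIntegral_eq_zero_of_forall_eq_zero fun x hx => le_antisymm (hneg x hx) (hf x hx))

lemma measure_setOf_pos_eq_ofReal_integral_div {m : ℝ} (hf : Measurable f)
    (hfi : IntegrableOn f s μ) (hf0 : ∀ x ∈ s, 0 ≤ f x) (hfm : ∀ x ∈ s, 0 < f x → f x = m) :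
    μ {x ∈ s | 0 < f x} = ENNReal.ofReal ((∫ x in s, f x ∂μ) / m) := by
  have hB : MeasurableSet {x | 0 < f x} := measurableSet_lt measurable_const hf
  have hf0_ae : 0 ≤ᵐ[μ.restrict s] f :=
    (ae_restrict_iff (measurableSet_le measurable_const hf)).2 (ae_of_all _ hf0)
  rcases le_or_gt m 0 with hm | hm
  · have hempty : {x ∈ s | 0 < f x} = ∅ :=
      eq_empty_of_forall_notMem fun x ⟨hx, hpos⟩ => (hfm x hx hpos ▸ hpos).not_ge hm
    rw [hempty, measure_empty, ENNReal.ofReal_eq_zero.2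
      (div_nonpos_of_nonneg_of_nonpos (integral_nonneg_of_ae hf0_ae) hm)]
  · have hae : (fun x => ENNReal.ofReal (f x)) =ᵐ[μ.restrict s]
        {x | 0 < f x}.indicator fun _ => ENNReal.ofReal m := by
      refine (ae_restrict_iff (measurableSet_eq_fun hf.ennreal_ofReal
        (measurable_const.indicator hB))).2 (ae_of_all _ fun x hx => ?_)
      by_cases hpos : 0 < f x
      · rw [indicator_of_mem (show x ∈ {x | 0 < f x} from hpos), hfm x hx hpos]
      · rw [indicator_of_notMem (show x ∉ {x | 0 < f x} from hpos),
          ENNReal.ofReal_of_nonpos (not_lt.1 hpos)]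
    rw [ENNReal.ofReal_div_of_pos hm, ofReal_integral_eq_lintegral_ofReal hfi hf0_ae,
      lintegral_congr_ae hae, lintegral_indicator_const hB, Measure.restrict_apply hB,
      Set.inter_comm, mul_comm,
      ENNReal.mul_div_cancel_right (ENNReal.ofReal_pos.2 hm).ne' ENNReal.ofReal_ne_top]
    rfl

end MeasureTheory

section DSO

open Finset

variable {N K : ℕ} {𝒯 : Set ℝ} {c : ℝ → ℝ} {β d μ : ℕ → ℝ} {q : ℕ → ℕ → ℝ → ℝ}
  {p : ℕ → ℝ → ℝ}

/-- Schedule delay, tolls of the bottlenecks `1, …, i` passed, and free-flow time of group `k`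
leaving origin `i` to arrive at time `t`. -/
def tripCost (c : ℝ → ℝ) (β d : ℕ → ℝ) (p : ℕ → ℝ → ℝ) (i k : ℕ) (t : ℝ) : ℝ :=
  β k * c t + (∑ j ∈ Icc 1 i, p j t) + d i

lemma tripCost_succ (i k : ℕ) (t : ℝ) :
    tripCost c β d p (i + 1) k t = tripCost c β d p i k t + p (i + 1) t + (d (i + 1) - d i) := by
  simp only [tripCost, sum_Icc_succ_top (Nat.le_add_left 1 i)]
  ring

lemma toll_succ_le_of_tripCost_le {i k : ℕ} {s t : ℝ}
    (h : tripCost c β d p i k t ≤ tripCost c β d p i k s)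
    (h' : tripCost c β d p (i + 1) k s ≤ tripCost c β d p (i + 1) k t) :
    p (i + 1) s ≤ p (i + 1) t := by
  rw [tripCost_succ, tripCost_succ] at h'
  linarith

lemma toll_succ_pos_of_flow_pos
    (hq0 : ∀ i ∈ Icc 1 N, ∀ k ∈ Icc 1 K, ∀ t ∈ 𝒯, 0 ≤ q i k t)
    (hopt : ∀ i ∈ Icc 1 N, ∀ k ∈ Icc 1 K, ∀ t ∈ 𝒯, 0 < q i k t →
      ∀ s ∈ 𝒯, tripCost c β d p i k t ≤ tripCost c β d p i k s)
    (hreach : ∀ i ∈ Icc 1 N, ∀ k ∈ Icc 1 K, ∃ s ∈ 𝒯, 0 < q i k s)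
    (hA1 : ∀ i ∈ Icc 1 N, ∀ t ∈ 𝒯, (0 < p i t ↔ 0 < ∑ k ∈ Icc 1 K, q i k t))
    {i : ℕ} (hi : i ∈ Icc 1 N) (hi' : i + 1 ∈ Icc 1 N) {t : ℝ} (ht : t ∈ 𝒯)
    (hpos : 0 < ∑ k ∈ Icc 1 K, q i k t) : 0 < p (i + 1) t := by
  obtain ⟨k, hk, hqt⟩ : ∃ k ∈ Icc 1 K, 0 < q i k t :=
    exists_lt_of_sum_lt (by simpa only [sum_const_zero] using hpos)
  obtain ⟨s, hs, hqs⟩ := hreach (i + 1) hi' k hk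
  have hps : 0 < p (i + 1) s :=
    (hA1 (i + 1) hi' s hs).2 (sum_pos' (fun k hk => hq0 (i + 1) hi' k hk s hs) ⟨k, hk, hqs⟩)
  exact hps.trans_le (toll_succ_le_of_tripCost_le (hopt i hi k hk t ht hqt s hs)
    (hopt (i + 1) hi' k hk s hs hqs t ht))

lemma flow_eq_capacity_sub_of_pos
    (hq0 : ∀ i ∈ Icc 1 N, ∀ k ∈ Icc 1 K, ∀ t ∈ 𝒯, 0 ≤ q i k t)
    (hopt : ∀ i ∈ Icc 1 N, ∀ k ∈ Icc 1 K, ∀ t ∈ 𝒯, 0 < q i k t →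
      ∀ s ∈ 𝒯, tripCost c β d p i k t ≤ tripCost c β d p i k s)
    (hreach : ∀ i ∈ Icc 1 N, ∀ k ∈ Icc 1 K, ∃ s ∈ 𝒯, 0 < q i k s)
    (hKKT2 : ∀ i ∈ Icc 1 N, ∀ t ∈ 𝒯,
      0 ≤ p i t ∧
      0 ≤ μ i - ∑ j ∈ Icc i N, ∑ k ∈ Icc 1 K, q j k t ∧
      p i t * (μ i - ∑ j ∈ Icc i N, ∑ k ∈ Icc 1 K, q j k t) = 0)
    (hA1 : ∀ i ∈ Icc 1 N, ∀ t ∈ 𝒯, (0 < p i t ↔ 0 < ∑ k ∈ Icc 1 K, q i k t))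
    (hμtop : μ (N + 1) = 0) {i : ℕ} (hi : i ∈ Icc 1 N) {t : ℝ} (ht : t ∈ 𝒯)
    (hpos : 0 < ∑ k ∈ Icc 1 K, q i k t) :
    ∑ k ∈ Icc 1 K, q i k t = μ i - μ (i + 1) := by
  have hsaturated : ∀ j ∈ Icc 1 N, 0 < p j t → ∑ j' ∈ Icc j N, ∑ k ∈ Icc 1 K, q j' k t = μ j := by
    intro j hj hp
    linarith [(mul_eq_zero.1 (hKKT2 j hj t ht).2.2).resolve_left hp.ne']
  have hnext : ∑ j ∈ Icc (i + 1) N, ∑ k ∈ Icc 1 K, q j k t = μ (i + 1) := by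
    rcases (mem_Icc.1 hi).2.eq_or_lt with rfl | hlt
    · simp [hμtop]
    · have hi' : i + 1 ∈ Icc 1 N := mem_Icc.2 ⟨Nat.le_add_left 1 i, hlt⟩
      exact hsaturated _ hi' (toll_succ_pos_of_flow_pos hq0 hopt hreach hA1 hi hi' ht hpos)
  have hcur := hsaturated i hi ((hA1 i hi t ht).2 hpos)
  rw [← add_sum_Ioc_eq_sum_Icc (mem_Icc.1 hi).2, ← Icc_add_one_left_eq_Ioc, hnext] at hcur
  linarith

end DSO

open MeasureTheory Finset Set

theorem dso_all_or_nothing_general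
    (N K : ℕ)
    (𝒯 : Set ℝ)
    -- base schedule delay cost function
    (c : ℝ → ℝ)
    -- heterogeneity parameters 1 = β¹ > β² > … > β^K > 0
    (β : ℕ → ℝ)
    -- capacities μ₁ > μ₂ > … > μ_N > 0, μ_(N+1) = 0
    (μ : ℕ → ℝ) (hμtop : μ (N + 1) = 0)
    -- free-flow travel times 0 ≤ d₁ < d₂ < … < d_N
    (d : ℕ → ℝ)
    -- demands
    (Q : ℕ → ℕ → ℝ) (hQ : ∀ i ∈ Finset.Icc 1 N, ∀ k ∈ Finset.Icc 1 K, 0 < Q i k)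
    -- a DSO solution (q, p, ρ)
    (q : ℕ → ℕ → ℝ → ℝ) (p : ℕ → ℝ → ℝ) (ρ : ℕ → ℕ → ℝ)
    (hqmeas : ∀ i k, Measurable (q i k))
    -- KKT condition (i): departure time choice complementarity
    (hKKT1 : ∀ i ∈ Finset.Icc 1 N, ∀ k ∈ Finset.Icc 1 K, ∀ t ∈ 𝒯,
      0 ≤ q i k t ∧
      0 ≤ β k * c t + (∑ j ∈ Finset.Icc 1 i, p j t) + d i - ρ i k ∧
      q i k t * (β k * c t + (∑ j ∈ Finset.Icc 1 i, p j t) + d i - ρ i k) = 0)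
    -- KKT condition (ii): capacity complementarity
    (hKKT2 : ∀ i ∈ Finset.Icc 1 N, ∀ t ∈ 𝒯,
      0 ≤ p i t ∧
      0 ≤ μ i - ∑ j ∈ Finset.Icc i N, ∑ k ∈ Finset.Icc 1 K, q j k t ∧
      p i t * (μ i - ∑ j ∈ Finset.Icc i N, ∑ k ∈ Finset.Icc 1 K, q j k t) = 0)
    -- KKT condition (iii): demand conservation
    (hKKT3 : ∀ i ∈ Finset.Icc 1 N, ∀ k ∈ Finset.Icc 1 K,
      ∫ t in 𝒯, q i k t = Q i k)
    -- Assumption 1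
    (hA1 : ∀ i ∈ Finset.Icc 1 N, ∀ t ∈ 𝒯,
      (0 < p i t ↔ 0 < ∑ k ∈ Finset.Icc 1 K, q i k t)) :
    (∀ i ∈ Finset.Icc 1 N, ∀ t ∈ 𝒯,
      0 < ∑ k ∈ Finset.Icc 1 K, q i k t →
      ∑ k ∈ Finset.Icc 1 K, q i k t = μ i - μ (i + 1)) ∧
    (∀ i ∈ Finset.Icc 1 N,
      volume {t ∈ 𝒯 | 0 < ∑ k ∈ Finset.Icc 1 K, q i k t} =
        ENNReal.ofReal ((∑ k ∈ Finset.Icc 1 K, Q i k) / (μ i - μ (i + 1)))) := by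
  have hq0 : ∀ i ∈ Finset.Icc 1 N, ∀ k ∈ Finset.Icc 1 K, ∀ t ∈ 𝒯, 0 ≤ q i k t :=
    fun i hi k hk t ht => (hKKT1 i hi k hk t ht).1
  have hopt : ∀ i ∈ Finset.Icc 1 N, ∀ k ∈ Finset.Icc 1 K, ∀ t ∈ 𝒯, 0 < q i k t →
      ∀ s ∈ 𝒯, tripCost c β d p i k t ≤ tripCost c β d p i k s := by
    intro i hi k hk t ht hq s hs
    have hbinding := (mul_eq_zero.1 (hKKT1 i hi k hk t ht).2.2).resolve_left hq.ne'
    have hslack := (hKKT1 i hi k hk s hs).2.1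
    unfold tripCost
    linarith
  have hQ_ne : ∀ i ∈ Finset.Icc 1 N, ∀ k ∈ Finset.Icc 1 K, ∫ t in 𝒯, q i k t ≠ 0 :=
    fun i hi k hk => hKKT3 i hi k hk ▸ (hQ i hi k hk).ne'
  have hreach : ∀ i ∈ Finset.Icc 1 N, ∀ k ∈ Finset.Icc 1 K, ∃ s ∈ 𝒯, 0 < q i k s :=
    fun i hi k hk => exists_pos_of_setIntegral_ne_zero (hq0 i hi k hk) (hQ_ne i hi k hk)
  have hflow := fun i hi t ht =>
    flow_eq_capacity_sub_of_pos hq0 hopt hreach hKKT2 hA1 hμtop (i := i) hi (t := t) ht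
  refine ⟨hflow, fun i hi => ?_⟩
  have hint : ∀ k ∈ Finset.Icc 1 K, IntegrableOn (q i k) 𝒯 :=
    fun k hk => Integrable.of_integral_ne_zero (hQ_ne i hi k hk)
  rw [measure_setOf_pos_eq_ofReal_integral_div (Finset.measurable_sum _ fun k _ => hqmeas i k)
    (integrable_finsetSum _ hint) (fun t ht => sum_nonneg fun k hk => hq0 i hi k hk t ht)
    (hflow i hi), integral_finsetSum _ hint, sum_congr rfl (hKKT3 i hi)]

/-- Lemma 2 of the paper: the aggregated DSO flow pattern is all-or-nothing, and
the arrival time window of origin i has length (Σ_k Q_(i,k))/(μ_i − μ_(i+1)). -/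
theorem dso_all_or_nothing
    (N K : ℕ) (hN : 1 ≤ N) (hK : 1 ≤ K)
    (𝒯 : Set ℝ)
    -- base schedule delay cost function
    (c : ℝ → ℝ) (hc0 : c 0 = 0) (hccont : Continuous c)
    (hcdec : StrictAntiOn c (Set.Iic (0 : ℝ)))
    (hcinc : StrictMonoOn c (Set.Ici (0 : ℝ)))
    -- heterogeneity parameters 1 = β¹ > β² > … > β^K > 0
    (β : ℕ → ℝ) (hβ1 : β 1 = 1)
    (hβdec : ∀ k, 1 ≤ k → k < K → β (k + 1) < β k)
    (hβpos : ∀ k ∈ Finset.Icc 1 K, 0 < β k)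
    -- capacities μ₁ > μ₂ > … > μ_N > 0, μ_(N+1) = 0
    (μ : ℕ → ℝ) (hμdec : ∀ i, 1 ≤ i → i < N → μ (i + 1) < μ i)
    (hμpos : ∀ i ∈ Finset.Icc 1 N, 0 < μ i) (hμtop : μ (N + 1) = 0)
    -- free-flow travel times 0 ≤ d₁ < d₂ < … < d_N
    (d : ℕ → ℝ) (hd1 : 0 ≤ d 1)
    (hdinc : ∀ i, 1 ≤ i → i < N → d i < d (i + 1))
    -- demands
    (Q : ℕ → ℕ → ℝ) (hQ : ∀ i ∈ Finset.Icc 1 N, ∀ k ∈ Finset.Icc 1 K, 0 < Q i k)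
    -- a DSO solution (q, p, ρ)
    (q : ℕ → ℕ → ℝ → ℝ) (p : ℕ → ℝ → ℝ) (ρ : ℕ → ℕ → ℝ)
    (hqmeas : ∀ i k, Measurable (q i k)) (hpmeas : ∀ i, Measurable (p i))
    -- KKT condition (i): departure time choice complementarity
    (hKKT1 : ∀ i ∈ Finset.Icc 1 N, ∀ k ∈ Finset.Icc 1 K, ∀ t ∈ 𝒯,
      0 ≤ q i k t ∧
      0 ≤ β k * c t + (∑ j ∈ Finset.Icc 1 i, p j t) + d i - ρ i k ∧
      q i k t * (β k * c t + (∑ j ∈ Finset.Icc 1 i, p j t) + d i - ρ i k) = 0)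
    -- KKT condition (ii): capacity complementarity
    (hKKT2 : ∀ i ∈ Finset.Icc 1 N, ∀ t ∈ 𝒯,
      0 ≤ p i t ∧
      0 ≤ μ i - ∑ j ∈ Finset.Icc i N, ∑ k ∈ Finset.Icc 1 K, q j k t ∧
      p i t * (μ i - ∑ j ∈ Finset.Icc i N, ∑ k ∈ Finset.Icc 1 K, q j k t) = 0)
    -- KKT condition (iii): demand conservation
    (hKKT3 : ∀ i ∈ Finset.Icc 1 N, ∀ k ∈ Finset.Icc 1 K,
      ∫ t in 𝒯, q i k t = Q i k)
    -- Assumption 1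
    (hA1 : ∀ i ∈ Finset.Icc 1 N, ∀ t ∈ 𝒯,
      (0 < p i t ↔ 0 < ∑ k ∈ Finset.Icc 1 K, q i k t))
    (hA1' : ∀ i ∈ Finset.Icc 1 N, ({t ∈ 𝒯 | 0 < p i t}).OrdConnected) :
    (∀ i ∈ Finset.Icc 1 N, ∀ t ∈ 𝒯,
      0 < ∑ k ∈ Finset.Icc 1 K, q i k t →
      ∑ k ∈ Finset.Icc 1 K, q i k t = μ i - μ (i + 1)) ∧
    (∀ i ∈ Finset.Icc 1 N,
      volume {t ∈ 𝒯 | 0 < ∑ k ∈ Finset.Icc 1 K, q i k t} =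
        ENNReal.ofReal ((∑ k ∈ Finset.Icc 1 K, Q i k) / (μ i - μ (i + 1)))) :=
  dso_all_or_nothing_general N K 𝒯 c β μ hμtop d Q hQ q p ρ hqmeas hKKT1 hKKT2 hKKT3 hA1
end

section
/- Single-bottleneck DSO sub-problem solution (Lemma 5 of the paper, after Akamatsu et al. 2021). Let μ̄ > 0, d ≥ 0, demands Q_1,…,Q_K > 0, and set T_k = (Σ_{l≤k} Q_l)/μ̄ (T_0 = 0). For each k let 𝒯_k = Γ(T_k) = [t⁻_k, t⁺_k] be an interval of length T_k with c(t⁻_k) = c(t⁺_k) =: c̄_k (and 𝒯_0 = ∅). Define q_k(t) = μ̄ for t ∈ 𝒯_k∖𝒯_{k−1} and q_k(t) = 0 otherwise; ρ_k = Σ_{l≥k} (β^l − β^{l+1}) c̄_l + d (with β^{K+1} = 0); and p̂(t) = ρ_k − β^k c(t) − d for t ∈ 𝒯_k∖𝒯_{k−1}, p̂(t) = 0 for t ∉ 𝒯_K. Then: (a) p̂(t) ≥ 0 for all t; (b) for every k, every l ∈ {1,…,K} and every t ∈ 𝒯_k∖𝒯_{k−1}, β^l c(t) + p̂(t) + d −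 ρ_l ≥ 0, with equality when l = k (so the departure-time-choice complementarity conditions of [DSO-Sub(i)] hold); (c) Σ_k q_k(t) = μ̄ for every t ∈ 𝒯_K; and (d) ∫ q_k(t) dt = Q_k for every k. -/
/-!
Since `c` is strictly quasi-convex, an interval `[a, b]` with `a < b` and `c a = c b` is exactly the
sublevel set `{t | c t ≤ c a}`. Longer windows therefore sit at higher levels: `c̄_k` is
nondecreasing and the windows are nested, so on the slice `𝒯_k ∖ 𝒯_{k-1}` we have
`c̄_m < c t` for `m < k` and `c t ≤ c̄_m` for `m ≥ k`.

Telescoping `β^l = ∑_{m ≥ l} (β^m - β^{m+1})` writes `β^l x + d - ρ_l` as the tail sum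
`∑_{m ≥ l} (β^m - β^{m+1}) (x - c̄_m)`. At `x = c t` its summands are nonnegative before `k` and
nonpositive from `k` on, so the tail sum is minimal at `l = k`: this is (b), and comparing with
the empty tail `l = K + 1` gives (a). The flows are indicators of the slices; these telescope to
the indicator of `𝒯_K`, giving (c), and the slice `k` has length `T_k - T_{k-1} = Q_k / μ̄`,
giving (d).
-/

open MeasureTheory Finset Set

theorem neg_and_pos_of_apply_eq {c : ℝ → ℝ} (hdec : StrictAntiOn c (Iic 0))
    (hinc : StrictMonoOn c (Ici 0)) {a b : ℝ} (hab : a < b) (h : c a = c b) :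
    a < 0 ∧ 0 < b := by
  constructor
  · by_contra! ha
    exact (hinc ha (ha.trans hab.le) hab).ne h
  · by_contra! hb
    exact (hdec (hab.le.trans hb) hb hab).ne' h

theorem Icc_eq_preimage_Iic_of_apply_eq {c : ℝ → ℝ} (hdec : StrictAntiOn c (Iic 0))
    (hinc : StrictMonoOn c (Ici 0)) {a b : ℝ} (hab : a < b) (h : c a = c b) :
    Icc a b = c ⁻¹' Iic (c a) := by
  obtain ⟨ha, hb⟩ := neg_and_pos_of_apply_eq hdec hinc hab h
  ext t
  simp only [Set.mem_Icc, Set.mem_preimage, Set.mem_Iic]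
  constructor
  · rintro ⟨hat, htb⟩
    rcases le_total t 0 with ht | ht
    · exact hdec.antitoneOn ha.le ht hat
    · exact (hinc.monotoneOn ht hb.le htb).trans h.ge
  · intro hta
    constructor
    · by_contra! hlt
      linarith [hdec (hlt.le.trans ha.le) ha.le hlt]
    · by_contra! hlt
      linarith [hinc hb.le (hb.le.trans hlt.le) hlt]

theorem apply_le_apply_of_sub_lt_sub {c : ℝ → ℝ} (hdec : StrictAntiOn c (Iic 0))
    (hinc : StrictMonoOn c (Ici 0)) {a b a' b' : ℝ} (hab : a < b) (h : c a = c b)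
    (hab' : a' < b') (h' : c a' = c b') (hlen : b - a < b' - a') : c a ≤ c a' := by
  by_contra! hlt
  have hsub : Icc a' b' ⊆ Icc a b := by
    rw [Icc_eq_preimage_Iic_of_apply_eq hdec hinc hab h,
      Icc_eq_preimage_Iic_of_apply_eq hdec hinc hab' h']
    exact preimage_mono (Iic_subset_Iic.mpr hlt.le)
  obtain ⟨h1, h2⟩ := (Icc_subset_Icc_iff hab'.le).mp hsub
  linarith

theorem sum_Icc_one_lt_sum_Icc_one {Q : ℕ → ℝ} {n j k : ℕ} (hQ : ∀ i ∈ Finset.Icc 1 n, 0 < Q i)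
    (hjk : j < k) (hkn : k ≤ n) : ∑ i ∈ Finset.Icc 1 j, Q i < ∑ i ∈ Finset.Icc 1 k, Q i :=
  sum_lt_sum_of_subset (Icc_subset_Icc_right hjk.le) (by simp; omega) (by simp [hjk])
    (hQ k (by simp; omega)) fun i hi _ => (hQ i (Icc_subset_Icc_right hkn hi)).le

theorem sum_Ico_le_sum_Ico_of_sign_change {M : Type*} [AddCommMonoid M] [PartialOrder M]
    [IsOrderedAddMonoid M] {a : ℕ → M} {k l n : ℕ} (hk : k ≤ n) (hl : l ≤ n)
    (hpos : ∀ m ∈ Finset.Ico l k, 0 ≤ a m) (hneg : ∀ m ∈ Finset.Ico k l, a m ≤ 0) :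
    ∑ m ∈ Finset.Ico k n, a m ≤ ∑ m ∈ Finset.Ico l n, a m := by
  rcases le_total l k with hlk | hkl
  · rw [← sum_Ico_consecutive a hlk hk]
    exact le_add_of_nonneg_left (sum_nonneg hpos)
  · rw [← sum_Ico_consecutive a hkl hl]
    exact add_le_of_nonpos_left (sum_nonpos hneg)

theorem sum_Ico_sub_succ_mul_sub (f y : ℕ → ℝ) (x : ℝ) {l n : ℕ} (h : l ≤ n) :
    ∑ m ∈ Finset.Ico l n, (f m - f (m + 1)) * (x - y m)
      = (f l - f n) * x - ∑ m ∈ Finset.Ico l n, (f m - f (m + 1)) * y m := by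
  have htele : ∑ m ∈ Finset.Ico l n, (f m - f (m + 1)) = f l - f n := by
    rw [← neg_sub, ← sum_Ico_sub f h]
    simp
  simp only [mul_sub, sum_sub_distrib, ← sum_mul, htele]

theorem exists_mem_sdiff_pred_of_mem {α : Type*} {s : ℕ → Set α} (h0 : s 0 = ∅) {n : ℕ}
    {x : α} (hx : x ∈ s n) : ∃ k ∈ Finset.Icc 1 n, x ∈ s k \ s (k - 1) := by
  induction n with
  | zero => simp [h0] at hx
  | succ n ih =>
    by_cases hxn : x ∈ s n
    · obtain ⟨k, hk, hxk⟩ := ih hxn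
      exact ⟨k, Icc_subset_Icc_right n.le_succ hk, hxk⟩
    · exact ⟨n + 1, by simp, hx, hxn⟩

theorem sum_indicator_sdiff_pred {α M : Type*} [AddCommGroup M] {s : ℕ → Set α} (h0 : s 0 = ∅)
    {n : ℕ} (hmono : ∀ k ∈ Finset.Icc 1 n, s (k - 1) ⊆ s k) (f : α → M) :
    ∑ k ∈ Finset.Icc 1 n, (s k \ s (k - 1)).indicator f = (s n).indicator f := by
  induction n with
  | zero => ext; simp [h0]
  | succ n ih =>
    rw [sum_Icc_succ_top (by omega), ih fun k hk => hmono k (Icc_subset_Icc_right n.le_succ hk),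
      Nat.add_sub_cancel, indicator_sdiff (by simpa using hmono (n + 1) (by simp))]
    abel

/-- The paper's `β^l x + d - ρ_l`, telescoped into a tail sum; its value `0` at `l = K + 1`
plays the role of `ρ_{K+1} = d`. -/
def excessCost (β cbar : ℕ → ℝ) (K l : ℕ) (x : ℝ) : ℝ :=
  ∑ m ∈ Finset.Ico l (K + 1), (β m - β (m + 1)) * (x - cbar m)

theorem mul_add_sub_eq_excessCost {β cbar ρ : ℕ → ℝ} {K l : ℕ} {d : ℝ} (hβK1 : β (K + 1) = 0)
    (hρ : ∀ k ∈ Finset.Icc 1 K,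
      ρ k = (∑ l ∈ Finset.Icc k K, (β l - β (l + 1)) * cbar l) + d)
    (hl : l ∈ Finset.Icc 1 K) (x : ℝ) : β l * x + d - ρ l = excessCost β cbar K l x := by
  rw [excessCost, sum_Ico_sub_succ_mul_sub β cbar x (by simp at hl; omega), hβK1, hρ l hl,
    Finset.Ico_add_one_right_eq_Icc]
  ring

theorem excessCost_le_excessCost {β cbar : ℕ → ℝ} {K k l : ℕ} {x : ℝ}
    (hβ : ∀ m ∈ Finset.Icc 1 K, β (m + 1) ≤ β m)
    (hx : ∀ m ∈ Finset.Icc 1 K, x ≤ cbar m ↔ k ≤ m) (hk : k ∈ Finset.Icc 1 K)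
    (hl : l ∈ Finset.Icc 1 (K + 1)) :
    excessCost β cbar K k x ≤ excessCost β cbar K l x := by
  simp only [Finset.mem_Icc] at hk hl
  apply sum_Ico_le_sum_Ico_of_sign_change (by omega) (by omega)
  · intro m hm
    simp only [Finset.mem_Ico] at hm
    have hm' : m ∈ Finset.Icc 1 K := Finset.mem_Icc.2 ⟨by omega, by omega⟩
    exact mul_nonneg (sub_nonneg.2 (hβ m hm'))
      (sub_nonneg.2 (not_le.1 (mt (hx m hm').1 (by omega))).le)
  · intro m hm
    simp only [Finset.mem_Ico] at hm
    have hm' : m ∈ Finset.Icc 1 K := Finset.mem_Icc.2 ⟨by omega, by omega⟩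
    exact mul_nonpos_of_nonneg_of_nonpos (sub_nonneg.2 (hβ m hm'))
      (sub_nonpos.2 ((hx m hm').2 hm.1))

section Windows

variable {c : ℝ → ℝ} {K : ℕ} {μbar : ℝ} {Q tm tp cbar : ℕ → ℝ}

theorem tm_lt_tp (hμbar : 0 < μbar) (hQ : ∀ k ∈ Finset.Icc 1 K, 0 < Q k)
    (hwin : ∀ k ∈ Finset.Icc 1 K,
      tm k ≤ tp k ∧ tp k - tm k = (∑ l ∈ Finset.Icc 1 k, Q l) / μbar ∧
      c (tm k) = cbar k ∧ c (tp k) = cbar k)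
    {k : ℕ} (hk : k ∈ Finset.Icc 1 K) : tm k < tp k := by
  have hsum := sum_Icc_one_lt_sum_Icc_one hQ (Finset.mem_Icc.1 hk).1 (Finset.mem_Icc.1 hk).2
  rw [Finset.Icc_eq_empty_of_lt zero_lt_one, Finset.sum_empty] at hsum
  rw [← sub_pos, (hwin k hk).2.1]
  exact div_pos hsum hμbar

theorem window_eq_preimage_Iic (hdec : StrictAntiOn c (Iic 0)) (hinc : StrictMonoOn c (Ici 0))
    (hμbar : 0 < μbar) (hQ : ∀ k ∈ Finset.Icc 1 K, 0 < Q k)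
    (hwin : ∀ k ∈ Finset.Icc 1 K,
      tm k ≤ tp k ∧ tp k - tm k = (∑ l ∈ Finset.Icc 1 k, Q l) / μbar ∧
      c (tm k) = cbar k ∧ c (tp k) = cbar k)
    {k : ℕ} (hk : k ∈ Finset.Icc 1 K) : Set.Icc (tm k) (tp k) = c ⁻¹' Iic (cbar k) := by
  obtain ⟨-, -, hm, hp⟩ := hwin k hk
  rw [Icc_eq_preimage_Iic_of_apply_eq hdec hinc (tm_lt_tp hμbar hQ hwin hk) (hm.trans hp.symm),
    hm]

theorem window_level_monotoneOn (hdec : StrictAntiOn c (Iic 0))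
    (hinc : StrictMonoOn c (Ici 0)) (hμbar : 0 < μbar) (hQ : ∀ k ∈ Finset.Icc 1 K, 0 < Q k)
    (hwin : ∀ k ∈ Finset.Icc 1 K,
      tm k ≤ tp k ∧ tp k - tm k = (∑ l ∈ Finset.Icc 1 k, Q l) / μbar ∧
      c (tm k) = cbar k ∧ c (tp k) = cbar k) :
    MonotoneOn cbar (Set.Icc 1 K) := by
  intro j hj k hk hjk
  have hj' : j ∈ Finset.Icc 1 K := Finset.mem_Icc.2 hj
  have hk' : k ∈ Finset.Icc 1 K := Finset.mem_Icc.2 hk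
  rcases hjk.eq_or_lt with rfl | hlt
  · exact le_rfl
  obtain ⟨-, hlj, hmj, hpj⟩ := hwin j hj'
  obtain ⟨-, hlk, hmk, hpk⟩ := hwin k hk'
  rw [← hmj, ← hmk]
  refine apply_le_apply_of_sub_lt_sub hdec hinc (tm_lt_tp hμbar hQ hwin hj') (hmj.trans hpj.symm)
    (tm_lt_tp hμbar hQ hwin hk') (hmk.trans hpk.symm) ?_
  rw [hlj, hlk]
  exact div_lt_div_of_pos_right (sum_Icc_one_lt_sum_Icc_one hQ hlt hk.2) hμbar

variable {W : ℕ → Set ℝ}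

theorem pred_subset_of_eq_preimage_Iic (h0 : W 0 = ∅)
    (hlevel : ∀ k ∈ Finset.Icc 1 K, W k = c ⁻¹' Iic (cbar k))
    (hcbar : MonotoneOn cbar (Set.Icc 1 K)) : ∀ k ∈ Finset.Icc 1 K, W (k - 1) ⊆ W k := by
  intro k hk
  obtain ⟨hk1, hkK⟩ := Finset.mem_Icc.1 hk
  rcases hk1.eq_or_lt with rfl | hk2
  · simp [h0]
  rw [hlevel (k - 1) (Finset.mem_Icc.2 ⟨by omega, by omega⟩), hlevel k hk]
  exact preimage_mono (Iic_subset_Iic.2 (hcbar ⟨by omega, by omega⟩ ⟨hk1, hkK⟩ (by omega)))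

theorem le_level_iff_of_mem_sdiff_pred
    (hlevel : ∀ k ∈ Finset.Icc 1 K, W k = c ⁻¹' Iic (cbar k))
    (hcbar : MonotoneOn cbar (Set.Icc 1 K)) {k : ℕ} (hk : k ∈ Finset.Icc 1 K) {t : ℝ}
    (ht : t ∈ W k \ W (k - 1)) : ∀ m ∈ Finset.Icc 1 K, c t ≤ cbar m ↔ k ≤ m := by
  intro m hm
  obtain ⟨hm1, hmK⟩ := Finset.mem_Icc.1 hm
  obtain ⟨hk1, hkK⟩ := Finset.mem_Icc.1 hk
  constructor
  · intro htm
    by_contra! hmk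
    apply ht.2
    rw [hlevel (k - 1) (Finset.mem_Icc.2 ⟨by omega, by omega⟩)]
    exact htm.trans (hcbar ⟨hm1, hmK⟩ ⟨by omega, by omega⟩ (by omega))
  · intro hkm
    have htk := ht.1
    rw [hlevel k hk] at htk
    exact htk.trans (hcbar ⟨hk1, hkK⟩ ⟨hm1, hmK⟩ hkm)

theorem measurableSet_window (h0 : W 0 = ∅)
    (hW : ∀ k ∈ Finset.Icc 1 K, W k = Set.Icc (tm k) (tp k)) {k : ℕ} (hk : k ≤ K) :
    MeasurableSet (W k) := by
  rcases Nat.eq_zero_or_pos k with rfl | hpos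
  · exact h0 ▸ MeasurableSet.empty
  · exact hW k (Finset.mem_Icc.2 ⟨hpos, hk⟩) ▸ measurableSet_Icc

theorem volume_real_window (h0 : W 0 = ∅)
    (hW : ∀ k ∈ Finset.Icc 1 K, W k = Set.Icc (tm k) (tp k))
    (hwin : ∀ k ∈ Finset.Icc 1 K,
      tm k ≤ tp k ∧ tp k - tm k = (∑ l ∈ Finset.Icc 1 k, Q l) / μbar ∧
      c (tm k) = cbar k ∧ c (tp k) = cbar k)
    {k : ℕ} (hk : k ≤ K) : volume.real (W k) = (∑ l ∈ Finset.Icc 1 k, Q l) / μbar := by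
  rcases Nat.eq_zero_or_pos k with rfl | hpos
  · simp [h0]
  · have hk' : k ∈ Finset.Icc 1 K := Finset.mem_Icc.2 ⟨hpos, hk⟩
    rw [hW k hk', Real.volume_real_Icc_of_le (hwin k hk').1, (hwin k hk').2.1]

theorem volume_real_window_sdiff_pred (h0 : W 0 = ∅)
    (hW : ∀ k ∈ Finset.Icc 1 K, W k = Set.Icc (tm k) (tp k))
    (hwin : ∀ k ∈ Finset.Icc 1 K,
      tm k ≤ tp k ∧ tp k - tm k = (∑ l ∈ Finset.Icc 1 k, Q l) / μbar ∧
      c (tm k) = cbar k ∧ c (tp k) = cbar k)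
    (hmono : ∀ k ∈ Finset.Icc 1 K, W (k - 1) ⊆ W k) {k : ℕ} (hk : k ∈ Finset.Icc 1 K) :
    volume.real (W k \ W (k - 1)) = Q k / μbar := by
  obtain ⟨j, rfl⟩ : ∃ j, k = j + 1 := ⟨k - 1, by simp at hk; omega⟩
  have hjK : j + 1 ≤ K := (Finset.mem_Icc.1 hk).2
  rw [measureReal_sdiff (hmono _ hk) (measurableSet_window h0 hW (by omega))
      (hW _ hk ▸ measure_Icc_lt_top.ne),
    volume_real_window h0 hW hwin hjK, Nat.add_sub_cancel,
    volume_real_window h0 hW hwin (by omega), Finset.sum_Icc_succ_top (by omega)]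
  ring

end Windows

theorem dso_sub_solution_general
    (K : ℕ)
    -- base schedule delay cost function
    (c : ℝ → ℝ)
    (hcdec : StrictAntiOn c (Set.Iic (0 : ℝ)))
    (hcinc : StrictMonoOn c (Set.Ici (0 : ℝ)))
    -- heterogeneity parameters 1 = β¹ > … > β^K > 0, β^(K+1) = 0
    (β : ℕ → ℝ)
    (hβdec : ∀ k, 1 ≤ k → k < K → β (k + 1) < β k)
    (hβpos : ∀ k ∈ Finset.Icc 1 K, 0 < β k) (hβK1 : β (K + 1) = 0)
    -- bottleneck data
    (μbar : ℝ) (hμbar : 0 < μbar) (d : ℝ)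
    (Q : ℕ → ℝ) (hQ : ∀ k ∈ Finset.Icc 1 K, 0 < Q k)
    -- windows 𝒯_k = Γ(T_k) = [t⁻_k, t⁺_k], length T_k = (Σ_(l≤k) Q_l)/μ̄,
    -- equal endpoint costs c̄_k
    (tm tp : ℕ → ℝ) (cbar : ℕ → ℝ)
    (hwin : ∀ k ∈ Finset.Icc 1 K,
      tm k ≤ tp k ∧
      tp k - tm k = (∑ l ∈ Finset.Icc 1 k, Q l) / μbar ∧
      c (tm k) = cbar k ∧ c (tp k) = cbar k)
    (W : ℕ → Set ℝ) (hW0 : W 0 = ∅)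
    (hW : ∀ k ∈ Finset.Icc 1 K, W k = Set.Icc (tm k) (tp k))
    -- the candidate flows q_k
    (q : ℕ → ℝ → ℝ)
    (hq : ∀ k ∈ Finset.Icc 1 K, ∀ t ∈ W k \ W (k - 1), q k t = μbar)
    (hq0 : ∀ k ∈ Finset.Icc 1 K, ∀ t, t ∉ W k \ W (k - 1) → q k t = 0)
    -- the candidate multipliers ρ_k
    (ρ : ℕ → ℝ)
    (hρ : ∀ k ∈ Finset.Icc 1 K,
      ρ k = (∑ l ∈ Finset.Icc k K, (β l - β (l + 1)) * cbar l) + d)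
    -- the candidate price p̂
    (phat : ℝ → ℝ)
    (hphat : ∀ k ∈ Finset.Icc 1 K, ∀ t ∈ W k \ W (k - 1),
      phat t = ρ k - β k * c t - d)
    (hphat0 : ∀ t ∉ W K, phat t = 0) :
    -- (a) nonnegativity of the price
    (∀ t : ℝ, 0 ≤ phat t) ∧
    -- (b) departure-time-choice complementarity
    (∀ k ∈ Finset.Icc 1 K, ∀ l ∈ Finset.Icc 1 K, ∀ t ∈ W k \ W (k - 1),
      0 ≤ β l * c t + phat t + d - ρ l ∧
      β k * c t + phat t + d - ρ k = 0) ∧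
    -- (c) capacity is exactly used on 𝒯_K
    (∀ t ∈ W K, ∑ k ∈ Finset.Icc 1 K, q k t = μbar) ∧
    -- (d) demand conservation
    (∀ k ∈ Finset.Icc 1 K, ∫ t, q k t = Q k) := by
  have hlevel : ∀ k ∈ Finset.Icc 1 K, W k = c ⁻¹' Iic (cbar k) := fun k hk =>
    (hW k hk).trans (window_eq_preimage_Iic hcdec hcinc hμbar hQ hwin hk)
  have hcbar := window_level_monotoneOn hcdec hcinc hμbar hQ hwin
  have hmono := pred_subset_of_eq_preimage_Iic hW0 hlevel hcbar
  have hβanti : ∀ m ∈ Finset.Icc 1 K, β (m + 1) ≤ β m := by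
    intro m hm
    rcases (Finset.mem_Icc.1 hm).2.lt_or_eq with hmK | rfl
    · exact (hβdec m (Finset.mem_Icc.1 hm).1 hmK).le
    · exact hβK1 ▸ (hβpos m hm).le
  have hcost_le : ∀ k ∈ Finset.Icc 1 K, ∀ t ∈ W k \ W (k - 1), ∀ l ∈ Finset.Icc 1 (K + 1),
      excessCost β cbar K k (c t) ≤ excessCost β cbar K l (c t) := fun k hk t ht l hl =>
    excessCost_le_excessCost hβanti (le_level_iff_of_mem_sdiff_pred hlevel hcbar hk ht) hk hl
  have hq_eq : ∀ k ∈ Finset.Icc 1 K, q k = (W k \ W (k - 1)).indicator fun _ => μbar :=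
    fun k hk => funext fun t => by
      by_cases ht : t ∈ W k \ W (k - 1) <;> simp [ht, hq k hk, hq0 k hk]
  refine ⟨fun t => ?_, fun k hk l hl t ht => ?_, fun t ht => ?_, fun k hk => ?_⟩
  · by_cases ht : t ∈ W K
    · obtain ⟨k, hk, htk⟩ := exists_mem_sdiff_pred_of_mem hW0 ht
      have hmin := hcost_le k hk t htk (K + 1) (by simp)
      have hk_cost := mul_add_sub_eq_excessCost hβK1 hρ hk (c t)
      have hlast : excessCost β cbar K (K + 1) (c t) = 0 := by simp [excessCost]
      rw [hphat k hk t htk]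
      linarith
    · exact (hphat0 t ht).ge
  · have hmin := hcost_le k hk t ht l (Finset.Icc_subset_Icc_right K.le_succ hl)
    rw [← mul_add_sub_eq_excessCost hβK1 hρ hk, ← mul_add_sub_eq_excessCost hβK1 hρ hl] at hmin
    rw [hphat k hk t ht]
    exact ⟨by linarith, by ring⟩
  · rw [← Finset.sum_apply, Finset.sum_congr rfl hq_eq, sum_indicator_sdiff_pred hW0 hmono,
      indicator_of_mem ht]
  · have hK := (Finset.mem_Icc.1 hk).2
    rw [hq_eq k hk, integral_indicator_const _
        ((measurableSet_window hW0 hW hK).diff (measurableSet_window hW0 hW (by omega))),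
      volume_real_window_sdiff_pred hW0 hW hwin hmono hk, smul_eq_mul]
    field_simp

/-- Lemma 5 of the paper (after Akamatsu et al. 2021): the explicit solution to the
single-bottleneck DSO sub-problem [DSO-Sub(i)]. -/
theorem dso_sub_solution
    (K : ℕ) (hK : 1 ≤ K)
    -- base schedule delay cost function
    (c : ℝ → ℝ) (hc0 : c 0 = 0) (hccont : Continuous c)
    (hcdec : StrictAntiOn c (Set.Iic (0 : ℝ)))
    (hcinc : StrictMonoOn c (Set.Ici (0 : ℝ)))
    -- heterogeneity parameters 1 = β¹ > … > β^K > 0, β^(K+1) = 0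
    (β : ℕ → ℝ) (hβ1 : β 1 = 1)
    (hβdec : ∀ k, 1 ≤ k → k < K → β (k + 1) < β k)
    (hβpos : ∀ k ∈ Finset.Icc 1 K, 0 < β k) (hβK1 : β (K + 1) = 0)
    -- bottleneck data
    (μbar : ℝ) (hμbar : 0 < μbar) (d : ℝ) (hd : 0 ≤ d)
    (Q : ℕ → ℝ) (hQ : ∀ k ∈ Finset.Icc 1 K, 0 < Q k)
    -- windows 𝒯_k = Γ(T_k) = [t⁻_k, t⁺_k], length T_k = (Σ_(l≤k) Q_l)/μ̄,
    -- equal endpoint costs c̄_k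
    (tm tp : ℕ → ℝ) (cbar : ℕ → ℝ)
    (hwin : ∀ k ∈ Finset.Icc 1 K,
      tm k ≤ tp k ∧
      tp k - tm k = (∑ l ∈ Finset.Icc 1 k, Q l) / μbar ∧
      c (tm k) = cbar k ∧ c (tp k) = cbar k)
    (W : ℕ → Set ℝ) (hW0 : W 0 = ∅)
    (hW : ∀ k ∈ Finset.Icc 1 K, W k = Set.Icc (tm k) (tp k))
    -- the candidate flows q_k
    (q : ℕ → ℝ → ℝ)
    (hq : ∀ k ∈ Finset.Icc 1 K, ∀ t ∈ W k \ W (k - 1), q k t = μbar)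
    (hq0 : ∀ k ∈ Finset.Icc 1 K, ∀ t, t ∉ W k \ W (k - 1) → q k t = 0)
    -- the candidate multipliers ρ_k
    (ρ : ℕ → ℝ)
    (hρ : ∀ k ∈ Finset.Icc 1 K,
      ρ k = (∑ l ∈ Finset.Icc k K, (β l - β (l + 1)) * cbar l) + d)
    -- the candidate price p̂
    (phat : ℝ → ℝ)
    (hphat : ∀ k ∈ Finset.Icc 1 K, ∀ t ∈ W k \ W (k - 1),
      phat t = ρ k - β k * c t - d)
    (hphat0 : ∀ t ∉ W K, phat t = 0) :
    -- (a) nonnegativity of the price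
    (∀ t : ℝ, 0 ≤ phat t) ∧
    -- (b) departure-time-choice complementarity
    (∀ k ∈ Finset.Icc 1 K, ∀ l ∈ Finset.Icc 1 K, ∀ t ∈ W k \ W (k - 1),
      0 ≤ β l * c t + phat t + d - ρ l ∧
      β k * c t + phat t + d - ρ k = 0) ∧
    -- (c) capacity is exactly used on 𝒯_K
    (∀ t ∈ W K, ∑ k ∈ Finset.Icc 1 K, q k t = μbar) ∧
    -- (d) demand conservation
    (∀ k ∈ Finset.Icc 1 K, ∫ t, q k t = Q k) :=
  dso_sub_solution_general K c hcdec hcinc β hβdec hβpos hβK1 μbar hμbar d Q hQ tm tp cbar hwin W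
    hW0 hW q hq hq0 ρ hρ phat hphat hphat0
end
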